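/- arXiv:2504.17745 — 4 statements merged into one kernel-verified Lean document; each statement's English description precedes it below -/
import Mathlib

section
/- Let v : ℝ → ℝ be twice continuously differentiable with compact support. Then −∫_ℝ v''(x) v(x) |x| dx = ∫_ℝ (v'(x))² |x| dx − v(0)². In particular, −∫_ℝ v''(x) v(x) |x| dx ≥ −v(0)². -/
/-!
On `(0, ∞)` the weight `|x|` is `x`, and `(v' v x - v² / 2)' = v'' v x + v'² x`, so by compact
support `∫₀^∞ (v'' v + v'²) |x| dx = v(0)² / 2`. The reflection `x ↦ -x` gives the same on
`(-∞, 0]`, and the two halves add up to the identity; the inequality then holds because the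
weighted energy `∫ v'² |x|` is nonnegative.
-/

open MeasureTheory Set

namespace HasCompactSupport

variable {f w : ℝ → ℝ}

theorem integrable_deriv_deriv_mul_self_mul (hf : ContDiff ℝ 2 f) (hsupp : HasCompactSupport f)
    (hw : Continuous w) : Integrable (fun x => deriv (deriv f) x * f x * w x) :=
  ((hf.deriv'.continuous_deriv le_rfl).mul hf.continuous |>.mul hw).integrable_of_hasCompactSupport
    hsupp.deriv.deriv.mul_right.mul_right

theorem integrable_deriv_sq_mul (hf : ContDiff ℝ 1 f) (hsupp : HasCompactSupport f)
    (hw : Continuous w) : Integrable (fun x => deriv f x ^ 2 * w x) :=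
  (((hf.continuous_deriv le_rfl).pow 2).mul hw).integrable_of_hasCompactSupport
    (hsupp.deriv.comp_left (g := fun y : ℝ => y ^ 2) (zero_pow two_ne_zero)).mul_right

theorem integral_Ioi_zero_deriv_deriv_mul_self_mul_abs (hf : ContDiff ℝ 2 f)
    (hsupp : HasCompactSupport f) :
    ∫ x in Ioi 0, deriv (deriv f) x * f x * |x|
      = -(∫ x in Ioi 0, deriv f x ^ 2 * |x|) + f 0 ^ 2 / 2 := by
  have hf' : ContDiff ℝ 1 (deriv f) := hf.deriv'
  have hf₁ : ContDiff ℝ 1 f := hf.of_le one_le_two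
  have hderiv (x : ℝ) : HasDerivAt (fun y => deriv f y * f y * y - f y ^ 2 / 2)
      (deriv (deriv f) x * f x * x + deriv f x ^ 2 * x) x := by
    have hd := (hf₁.differentiable one_ne_zero x).hasDerivAt
    have hdd := (hf'.differentiable one_ne_zero x).hasDerivAt
    refine (((hdd.mul hd).mul (hasDerivAt_id' x)).sub ((hd.pow 2).div_const 2)).congr_deriv ?_
    simp only [Pi.mul_apply, Nat.cast_ofNat]
    ring
  have hFTC :
      ∫ x in Ioi 0, deriv (fun y => deriv f y * f y * y - f y ^ 2 / 2) x = f 0 ^ 2 / 2 := by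
    rw [(hsupp.deriv.mul_right.mul_right (f' := fun y => y) |>.sub
      (hsupp.comp_left (g := fun y : ℝ => y ^ 2 / 2) (by simp))).integral_Ioi_deriv_eq
        (((hf'.mul hf₁).mul contDiff_fun_id).sub ((hf₁.pow 2).div_const 2)) 0]
    simp
  have habs (g : ℝ → ℝ) : ∫ x in Ioi 0, g x * |x| = ∫ x in Ioi 0, g x * x :=
    setIntegral_congr_fun measurableSet_Ioi fun x hx => by rw [abs_of_pos hx]
  simp only [(hderiv _).deriv] at hFTC
  rw [integral_add (hsupp.integrable_deriv_deriv_mul_self_mul hf continuous_id').integrableOn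
    (hsupp.integrable_deriv_sq_mul hf₁ continuous_id').integrableOn] at hFTC
  rw [habs, habs]
  linarith

theorem integral_Iic_zero_deriv_deriv_mul_self_mul_abs (hf : ContDiff ℝ 2 f)
    (hsupp : HasCompactSupport f) :
    ∫ x in Iic 0, deriv (deriv f) x * f x * |x|
      = -(∫ x in Iic 0, deriv f x ^ 2 * |x|) + f 0 ^ 2 / 2 := by
  have hreflected :=
    (hsupp.comp_homeomorph (Homeomorph.neg ℝ)).integral_Ioi_zero_deriv_deriv_mul_self_mul_abs
      (hf.comp contDiff_neg)
  have hneg : deriv (deriv fun x => f (-x)) = fun x => deriv (deriv f) (-x) := by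
    funext x
    simp only [funext (deriv_comp_neg f), deriv.fun_neg, deriv_comp_neg, neg_neg]
  simp only [Function.comp_def, hneg, deriv_comp_neg, neg_sq, neg_zero] at hreflected
  have hsubst₁ := integral_comp_neg_Ioi 0 (fun y => deriv (deriv f) y * f y * |y|)
  have hsubst₂ := integral_comp_neg_Ioi 0 (fun y => deriv f y ^ 2 * |y|)
  simp only [abs_neg, neg_zero] at hsubst₁ hsubst₂
  rw [← hsubst₁, ← hsubst₂, hreflected]

theorem integral_deriv_deriv_mul_self_mul_abs (hf : ContDiff ℝ 2 f)
    (hsupp : HasCompactSupport f) :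
    ∫ x, deriv (deriv f) x * f x * |x| = -(∫ x, deriv f x ^ 2 * |x|) + f 0 ^ 2 := by
  have hint₁ := hsupp.integrable_deriv_deriv_mul_self_mul hf continuous_abs
  have hint₂ := hsupp.integrable_deriv_sq_mul (hf.of_le one_le_two) continuous_abs
  rw [← intervalIntegral.integral_Iic_add_Ioi (b := 0) hint₁.integrableOn hint₁.integrableOn,
    ← intervalIntegral.integral_Iic_add_Ioi (b := 0) hint₂.integrableOn hint₂.integrableOn,
    hsupp.integral_Iic_zero_deriv_deriv_mul_self_mul_abs hf,
    hsupp.integral_Ioi_zero_deriv_deriv_mul_self_mul_abs hf]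
  ring

end HasCompactSupport

/-- For `v` a `C²` compactly supported function,
`-∫ v'' v |x| dx = ∫ (v')² |x| dx - v(0)²`, and in particular `-∫ v'' v |x| dx ≥ -v(0)²`. -/
theorem weighted_second_derivative_identity
    (v : ℝ → ℝ) (hv : ContDiff ℝ 2 v) (hsupp : HasCompactSupport v) :
    (-∫ x : ℝ, deriv (deriv v) x * v x * |x|
        = (∫ x : ℝ, (deriv v x) ^ 2 * |x|) - v 0 ^ 2) ∧
    -(v 0 ^ 2) ≤ -∫ x : ℝ, deriv (deriv v) x * v x * |x| := by
  have hidentity := hsupp.integral_deriv_deriv_mul_self_mul_abs hv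
  have henergy_nonneg : 0 ≤ ∫ x, deriv v x ^ 2 * |x| :=
    integral_nonneg fun x => by positivity
  constructor <;> linarith
end

section
/- Let v : ℝ → ℝ be three times continuously differentiable with compact support. Then ∫_ℝ v'''(x) v(x) |x| dx = (3/2) ∫_ℝ (v'(x))² sgn(x) dx + 2 v(0) v'(0). In particular, |∫_ℝ v'''(x) v(x) |x| dx| ≤ (3/2) ∫_ℝ (v'(x))² dx + 2 |v(0)| |v'(0)|. -/
/-!
On each half-line the weight `|x|` is `±x`, and
`(v'' v - v'² / 2) (x - a) - v v'` is a primitive of `v''' v (x - a) - (3/2) v'²`.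
Integrating it over `(a, ∞)` and `(-∞, a]` leaves only the boundary value `-v(a) v'(a)`;
at `a = 0` the two half-line identities combine into the weighted one, with `sgn` recording the
sign change of the weight.
-/

open MeasureTheory Set

lemma abs_eq_mul_sign (x : ℝ) : |x| = x * Real.sign x := by
  rcases lt_trichotomy x 0 with hx | rfl | hx
  · rw [abs_of_neg hx, Real.sign_of_neg hx, mul_neg_one]
  · simp
  · rw [abs_of_pos hx, Real.sign_of_pos hx, mul_one]

lemma integral_mul_sign {f : ℝ → ℝ} (hf : Integrable f) :
    ∫ x, f x * Real.sign x = (∫ x in Ioi 0, f x) - ∫ x in Iic 0, f x := by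
  have hneg : EqOn (fun x ↦ f x * Real.sign x) (fun x ↦ -f x) (Iio 0) := fun x hx ↦ by
    simp [Real.sign_of_neg (mem_Iio.mp hx)]
  have hpos : EqOn (fun x ↦ f x * Real.sign x) f (Ioi 0) := fun x hx ↦ by
    simp [Real.sign_of_pos (mem_Ioi.mp hx)]
  have hleft : IntegrableOn (fun x ↦ f x * Real.sign x) (Iic 0) :=
    (integrableOn_Iic_iff_integrableOn_Iio).mpr
      (hf.integrableOn.neg.congr_fun hneg.symm measurableSet_Iio)
  have hright : IntegrableOn (fun x ↦ f x * Real.sign x) (Ioi 0) :=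
    hf.integrableOn.congr_fun hpos.symm measurableSet_Ioi
  rw [← intervalIntegral.integral_Iic_add_Ioi hleft hright, integral_Iic_eq_integral_Iio,
    integral_Iic_eq_integral_Iio, setIntegral_congr_fun measurableSet_Iio hneg,
    setIntegral_congr_fun measurableSet_Ioi hpos, integral_neg]
  ring

lemma abs_integral_mul_sign_le {f : ℝ → ℝ} (hf : Integrable f) (hf₀ : 0 ≤ f) :
    |∫ x, f x * Real.sign x| ≤ ∫ x, f x := by
  have hIic : 0 ≤ ∫ x in Iic 0, f x := setIntegral_nonneg measurableSet_Iic fun x _ ↦ hf₀ x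
  have hIoi : 0 ≤ ∫ x in Ioi 0, f x := setIntegral_nonneg measurableSet_Ioi fun x _ ↦ hf₀ x
  rw [integral_mul_sign hf,
    ← intervalIntegral.integral_Iic_add_Ioi hf.integrableOn hf.integrableOn, abs_sub_le_iff]
  constructor <;> linarith

section ThirdDerivative

variable {v : ℝ → ℝ}

lemma integrable_thirdDeriv_mul_mul (hv : ContDiff ℝ 3 v) (hsupp : HasCompactSupport v)
    {w : ℝ → ℝ} (hw : Continuous w) :
    Integrable fun x ↦ deriv (deriv (deriv v)) x * v x * w x :=
  Continuous.integrable_of_hasCompactSupport (by fun_prop)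
    ((hsupp.mul_left (f := deriv (deriv (deriv v)))).mul_right (f' := w))

lemma integrable_deriv_sq (hv : ContDiff ℝ 3 v) (hsupp : HasCompactSupport v) :
    Integrable fun x ↦ deriv v x ^ 2 := by
  have hv' : Continuous (deriv v) := hv.continuous_deriv (by norm_num)
  simp only [sq]
  exact Continuous.integrable_of_hasCompactSupport (by fun_prop) hsupp.deriv.mul_left

noncomputable def thirdDerivPrimitive (v : ℝ → ℝ) (a y : ℝ) : ℝ :=
  (deriv (deriv v) y * v y - deriv v y ^ 2 / 2) * (y - a) - v y * deriv v y

lemma hasDerivAt_thirdDerivPrimitive (hv : ContDiff ℝ 3 v) (a x : ℝ) :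
    HasDerivAt (thirdDerivPrimitive v a)
      (deriv (deriv (deriv v)) x * v x * (x - a) - 3 / 2 * deriv v x ^ 2) x := by
  have h₀ : HasDerivAt v (deriv v x) x := (hv.differentiable (by norm_num) x).hasDerivAt
  have h₁ : HasDerivAt (deriv v) (deriv (deriv v) x) x :=
    ((hv.deriv' (n := 2)).differentiable (by norm_num) x).hasDerivAt
  have h₂ : HasDerivAt (deriv (deriv v)) (deriv (deriv (deriv v)) x) x :=
    (((hv.deriv' (n := 2)).deriv' (n := 1)).differentiable (by norm_num) x).hasDerivAt
  refine ((((h₂.mul h₀).sub ((h₁.pow 2).div_const 2)).mul ((hasDerivAt_id x).sub_const a)).sub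
    (h₀.mul h₁)).congr_deriv ?_
  simp only [id, Pi.sub_apply, Pi.mul_apply, Pi.pow_apply]
  ring

lemma contDiff_thirdDerivPrimitive (hv : ContDiff ℝ 3 v) (a : ℝ) :
    ContDiff ℝ 1 (thirdDerivPrimitive v a) := by
  have h₀ : ContDiff ℝ 1 v := hv.of_le (by norm_num)
  have h₁ : ContDiff ℝ 1 (deriv v) := (hv.deriv' (n := 2)).of_le (by norm_num)
  have h₂ : ContDiff ℝ 1 (deriv (deriv v)) := (hv.deriv' (n := 2)).deriv' (n := 1)
  unfold thirdDerivPrimitive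
  fun_prop

lemma HasCompactSupport.thirdDerivPrimitive (hsupp : HasCompactSupport v) (a : ℝ) :
    HasCompactSupport (thirdDerivPrimitive v a) := by
  have hsq : HasCompactSupport fun y ↦ deriv v y ^ 2 / 2 :=
    hsupp.deriv.comp_left (g := fun t ↦ t ^ 2 / 2) (by norm_num)
  exact ((hsupp.mul_left.sub hsq).mul_right).sub hsupp.mul_right

lemma integral_Ioi_thirdDeriv_mul_mul_sub (hv : ContDiff ℝ 3 v) (hsupp : HasCompactSupport v)
    (a : ℝ) :
    ∫ x in Ioi a, deriv (deriv (deriv v)) x * v x * (x - a)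
      = 3 / 2 * (∫ x in Ioi a, deriv v x ^ 2) + v a * deriv v a := by
  have hFTC := (hsupp.thirdDerivPrimitive a).integral_Ioi_deriv_eq
    (contDiff_thirdDerivPrimitive hv a) a
  simp only [fun x ↦ (hasDerivAt_thirdDerivPrimitive hv a x).deriv] at hFTC
  rw [integral_sub (integrable_thirdDeriv_mul_mul hv hsupp (by fun_prop)).integrableOn
    ((integrable_deriv_sq hv hsupp).integrableOn.const_mul _), integral_const_mul] at hFTC
  simp only [thirdDerivPrimitive, sub_self, mul_zero, zero_sub, neg_neg] at hFTC
  linarith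

lemma integral_Iic_thirdDeriv_mul_mul_sub (hv : ContDiff ℝ 3 v) (hsupp : HasCompactSupport v)
    (a : ℝ) :
    ∫ x in Iic a, deriv (deriv (deriv v)) x * v x * (x - a)
      = 3 / 2 * (∫ x in Iic a, deriv v x ^ 2) - v a * deriv v a := by
  have hFTC := (hsupp.thirdDerivPrimitive a).integral_Iic_deriv_eq
    (contDiff_thirdDerivPrimitive hv a) a
  simp only [fun x ↦ (hasDerivAt_thirdDerivPrimitive hv a x).deriv] at hFTC
  rw [integral_sub (integrable_thirdDeriv_mul_mul hv hsupp (by fun_prop)).integrableOn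
    ((integrable_deriv_sq hv hsupp).integrableOn.const_mul _), integral_const_mul] at hFTC
  simp only [thirdDerivPrimitive, sub_self, mul_zero, zero_sub] at hFTC
  linarith

end ThirdDerivative

/-- For `v` a `C³` compactly supported function,
`∫ v''' v |x| dx = (3/2) ∫ (v')² sgn(x) dx + 2 v(0) v'(0)`, and consequently
`|∫ v''' v |x| dx| ≤ (3/2) ∫ (v')² dx + 2 |v(0)| |v'(0)|`. -/
theorem weighted_third_derivative_identity
    (v : ℝ → ℝ) (hv : ContDiff ℝ 3 v) (hsupp : HasCompactSupport v) :
    (∫ x : ℝ, deriv (deriv (deriv v)) x * v x * |x|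
        = (3 / 2) * (∫ x : ℝ, (deriv v x) ^ 2 * Real.sign x) + 2 * v 0 * deriv v 0) ∧
    abs (∫ x : ℝ, deriv (deriv (deriv v)) x * v x * |x|)
        ≤ (3 / 2) * (∫ x : ℝ, (deriv v x) ^ 2) + 2 * |v 0| * |deriv v 0| := by
  have hIoi := integral_Ioi_thirdDeriv_mul_mul_sub hv hsupp 0
  have hIic := integral_Iic_thirdDeriv_mul_mul_sub hv hsupp 0
  simp only [sub_zero] at hIoi hIic
  have hsq := integrable_deriv_sq hv hsupp
  have hid : ∫ x : ℝ, deriv (deriv (deriv v)) x * v x * |x|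
      = (3 / 2) * (∫ x : ℝ, (deriv v x) ^ 2 * Real.sign x) + 2 * v 0 * deriv v 0 := by
    simp only [abs_eq_mul_sign, ← mul_assoc]
    rw [integral_mul_sign (integrable_thirdDeriv_mul_mul hv hsupp continuous_id'),
      integral_mul_sign hsq, hIoi, hIic]
    ring
  refine ⟨hid, hid ▸ ?_⟩
  calc |(3 / 2) * (∫ x : ℝ, (deriv v x) ^ 2 * Real.sign x) + 2 * v 0 * deriv v 0|
      ≤ (3 / 2) * |∫ x : ℝ, (deriv v x) ^ 2 * Real.sign x| + 2 * |v 0| * |deriv v 0| := by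
        refine (abs_add_le _ _).trans_eq ?_
        simp only [abs_mul, abs_two, abs_of_pos (by norm_num : (0 : ℝ) < 3 / 2)]
    _ ≤ (3 / 2) * (∫ x : ℝ, (deriv v x) ^ 2) + 2 * |v 0| * |deriv v 0| := by
        gcongr
        exact abs_integral_mul_sign_le hsq fun x ↦ sq_nonneg _
end

section
/- Let c > 0 and let I₁, I₂ : [0,∞) → [0,∞) be continuously differentiable functions satisfying I₁'(t) + c I₁(t) + I₂'(t) ≤ 0 for all t ≥ 0. Then for every t ≥ 0, I₁(t) ≤ (I₁(0) + I₂(0)) e^{−ct} + sup_{0 ≤ s ≤ t} I₂(s). -/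
open MeasureTheory Real

open Set

/-! With `M = sup_{[0,t]} I₂`, the function `F = I₁ + I₂ - M` satisfies
`F' ≤ -c I₁ = -c F + c (I₂ - M) ≤ -c F` on `[0, t]`, so `F t ≤ F 0 * e^{-ct}` by the linear
Grönwall inequality. Then `I₁ t = F t + M - I₂ t`, and `I₂ t ≥ 0` together with `M ≥ I₂ t`
absorb the `-M` and `-I₂ t` terms. -/

theorem le_mul_exp_of_deriv_right_le_mul {f f' : ℝ → ℝ} {K a b : ℝ}
    (hf : ContinuousOn f (Icc a b))
    (hf' : ∀ x ∈ Ico a b, HasDerivWithinAt f (f' x) (Ici x) x)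
    (bound : ∀ x ∈ Ico a b, f' x ≤ K * f x) :
    ∀ x ∈ Icc a b, f x ≤ f a * exp (K * (x - a)) := by
  intro x hx
  rw [← gronwallBound_ε0]
  exact le_gronwallBound_of_liminf_deriv_right_le hf
    (fun y hy _ hr => (hf' y hy).liminf_right_slope_le hr) le_rfl
    (fun y hy => by simpa using bound y hy) x hx

theorem add_sub_le_mul_exp_of_deriv_add_mul_add_deriv_nonpos {c t M : ℝ} (hc : 0 ≤ c)
    {I₁ I₂ : ℝ → ℝ} (hI₁ : Differentiable ℝ I₁) (hI₂ : Differentiable ℝ I₂)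
    (hdiff : ∀ s ∈ Ico 0 t, deriv I₁ s + c * I₁ s + deriv I₂ s ≤ 0)
    (hM : ∀ s ∈ Icc 0 t, I₂ s ≤ M) (ht : 0 ≤ t) :
    I₁ t + I₂ t - M ≤ (I₁ 0 + I₂ 0 - M) * exp (-c * t) := by
  have hF : Differentiable ℝ fun s => I₁ s + I₂ s - M := (hI₁.add hI₂).sub_const M
  have bound : ∀ s ∈ Ico 0 t,
      deriv I₁ s + deriv I₂ s ≤ -c * (I₁ s + I₂ s - M) := fun s hs => by
    have hc_gap := mul_nonneg hc (sub_nonneg.2 (hM s (Ico_subset_Icc_self hs)))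
    linarith [hdiff s hs]
  simpa using le_mul_exp_of_deriv_right_le_mul hF.continuous.continuousOn
    (fun s _ => (((hI₁ s).hasDerivAt.add (hI₂ s).hasDerivAt).sub_const M).hasDerivWithinAt)
    bound t ⟨ht, le_rfl⟩

theorem gronwall_high_low_frequency_general
    (c : ℝ) (hc : 0 < c) (I₁ I₂ : ℝ → ℝ)
    (hI₁ : ContDiff ℝ 1 I₁) (hI₂ : ContDiff ℝ 1 I₂)
    (hI₂_nonneg : ∀ t : ℝ, 0 ≤ t → 0 ≤ I₂ t)
    (hdiff : ∀ t : ℝ, 0 ≤ t → deriv I₁ t + c * I₁ t + deriv I₂ t ≤ 0) :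
    ∀ t : ℝ, 0 ≤ t →
      I₁ t ≤ (I₁ 0 + I₂ 0) * Real.exp (-c * t) + sSup (I₂ '' Set.Icc 0 t) := by
  intro t ht
  set M := sSup (I₂ '' Icc 0 t)
  have hM : ∀ s ∈ Icc 0 t, I₂ s ≤ M := fun s hs =>
    le_csSup (isCompact_Icc.image hI₂.continuous).bddAbove ⟨s, hs, rfl⟩
  have hdecay := add_sub_le_mul_exp_of_deriv_add_mul_add_deriv_nonpos hc.le
    (hI₁.differentiable one_ne_zero) (hI₂.differentiable one_ne_zero)
    (fun s hs => hdiff s hs.1) hM ht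
  have hI₂_t := hI₂_nonneg t ht
  have hM_exp : 0 ≤ M * exp (-c * t) :=
    mul_nonneg (hI₂_t.trans (hM t ⟨ht, le_rfl⟩)) (exp_pos _).le
  linarith

/-- Grönwall-type lemma: if `I₁, I₂ : [0,∞) → [0,∞)` are `C¹` with
`I₁' + c I₁ + I₂' ≤ 0` on `[0,∞)` for some `c > 0`, then
`I₁(t) ≤ (I₁(0) + I₂(0)) e^{-ct} + sup_{0 ≤ s ≤ t} I₂(s)`. -/
theorem gronwall_high_low_frequency
    (c : ℝ) (hc : 0 < c) (I₁ I₂ : ℝ → ℝ)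
    (hI₁ : ContDiff ℝ 1 I₁) (hI₂ : ContDiff ℝ 1 I₂)
    (hI₁_nonneg : ∀ t : ℝ, 0 ≤ t → 0 ≤ I₁ t)
    (hI₂_nonneg : ∀ t : ℝ, 0 ≤ t → 0 ≤ I₂ t)
    (hdiff : ∀ t : ℝ, 0 ≤ t → deriv I₁ t + c * I₁ t + deriv I₂ t ≤ 0) :
    ∀ t : ℝ, 0 ≤ t →
      I₁ t ≤ (I₁ 0 + I₂ 0) * Real.exp (-c * t) + sSup (I₂ '' Set.Icc 0 t) :=
  gronwall_high_low_frequency_general c hc I₁ I₂ hI₁ hI₂ hI₂_nonneg hdiff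
end

section
/- The function u : ℝ × ℝ → ℝ defined by u(t,x) = (6/5)[sech²(x + (12/5)t) − 2 tanh(x + (12/5)t) − 2] is a classical solution of the KdV–Burgers equation u_t − u_xx + u u_x = ν u_xxx with ν = −1/10; that is, u_t(t,x) − u_xx(t,x) + u(t,x) u_x(t,x) + (1/10) u_xxx(t,x) = 0 for all (t,x) ∈ ℝ × ℝ. -/
/-!
The profile is a traveling front `u(t,x) = φ(x + 12/5 t)` with `φ = -(6/5)(1 + tanh)²`, so the
PDE reduces to the ODE `(12/5) φ' - φ'' + φ φ' + φ'''/10 = 0`. Since `tanh' = 1 - tanh²`, the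
derivative of `p ∘ tanh` for a polynomial `p` is `(p' · (1 - X²)) ∘ tanh`; hence all derivatives
of `φ` are polynomials in `tanh`, and the ODE becomes a polynomial identity.
-/

open Real Polynomial

theorem Real.one_div_cosh_sq (x : ℝ) : (1 / cosh x) ^ 2 = 1 - tanh x ^ 2 := by
  have hc : cosh x ≠ 0 := (cosh_pos x).ne'
  rw [tanh_eq_sinh_div_cosh]
  field_simp
  linarith [cosh_sq' x]

theorem Real.hasDerivAt_tanh (x : ℝ) : HasDerivAt tanh (1 - tanh x ^ 2) x := by
  have hc : cosh x ≠ 0 := (cosh_pos x).ne'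
  refine (((hasDerivAt_sinh x).div (hasDerivAt_cosh x) hc).congr_of_eventuallyEq
    (.of_forall tanh_eq_sinh_div_cosh)).congr_deriv ?_
  rw [tanh_eq_sinh_div_cosh]
  field_simp

noncomputable def tanhDerivative (p : ℝ[X]) : ℝ[X] := derivative p * (1 - X ^ 2)

theorem hasDerivAt_eval_tanh (p : ℝ[X]) (x : ℝ) :
    HasDerivAt (fun x => p.eval (tanh x)) ((tanhDerivative p).eval (tanh x)) x := by
  rw [tanhDerivative, eval_mul, eval_sub, eval_one, eval_pow, eval_X]
  exact (p.hasDerivAt (tanh x)).comp x (hasDerivAt_tanh x)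

theorem deriv_eval_tanh (p : ℝ[X]) :
    deriv (fun x => p.eval (tanh x)) = fun x => (tanhDerivative p).eval (tanh x) :=
  _root_.funext fun x => (hasDerivAt_eval_tanh p x).deriv

theorem deriv_fun_comp_add_const (f : ℝ → ℝ) (a : ℝ) :
    deriv (fun x => f (x + a)) = fun x => deriv f (x + a) :=
  _root_.funext fun x => deriv_comp_add_const f a x

theorem deriv_comp_const_add_mul (f : ℝ → ℝ) (x c t : ℝ) :
    deriv (fun s => f (x + c * s)) t = c * deriv f (x + c * t) := by
  rw [deriv_comp_mul_left c (fun y => f (x + y)), deriv_comp_const_add, smul_eq_mul]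

/-- `(6/5)(sech² - 2 tanh - 2) = -(6/5)(1 + tanh)²` as `sech² = 1 - tanh²`. -/
noncomputable def frontPolynomial : ℝ[X] := C (-(6 / 5)) * (1 + X) ^ 2

theorem frontPolynomial_ode :
    C (12 / 5) * tanhDerivative frontPolynomial - tanhDerivative (tanhDerivative frontPolynomial)
      + frontPolynomial * tanhDerivative frontPolynomial
      + C (1 / 10) * tanhDerivative (tanhDerivative (tanhDerivative frontPolynomial)) = 0 := by
  refine Polynomial.funext fun y => ?_
  simp only [tanhDerivative, frontPolynomial, derivative_mul, derivative_C, derivative_sq,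
    derivative_add, derivative_sub, derivative_one, derivative_X, derivative_zero]
  simp only [eval_add, eval_sub, eval_mul, eval_C, eval_one, eval_X, eval_pow, eval_zero]
  ring

noncomputable def frontProfile : ℝ → ℝ := fun ξ => frontPolynomial.eval (tanh ξ)

theorem frontProfile_ode (ξ : ℝ) :
    12 / 5 * deriv frontProfile ξ - deriv (deriv frontProfile) ξ
      + frontProfile ξ * deriv frontProfile ξ + 1 / 10 * deriv (deriv (deriv frontProfile)) ξ
      = 0 := by
  have h := congrArg (eval (tanh ξ)) frontPolynomial_ode
  simp only [eval_add, eval_sub, eval_mul, eval_C, eval_zero] at h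
  unfold frontProfile
  simpa only [deriv_eval_tanh] using h

/-- The explicit profile `u(t,x) = (6/5)[sech²(x + (12/5)t) - 2 tanh(x + (12/5)t) - 2]`
is a classical solution of the KdV–Burgers equation with `ν = -1/10`:
`u_t - u_xx + u u_x + (1/10) u_xxx = 0`. -/
theorem explicit_kdv_burgers_front
    (u : ℝ → ℝ → ℝ)
    (hu : ∀ t x : ℝ, u t x
      = (6 / 5) * ((1 / Real.cosh (x + (12 / 5) * t)) ^ 2
          - 2 * Real.tanh (x + (12 / 5) * t) - 2)) :
    ∀ t x : ℝ,
      deriv (fun s => u s x) t - deriv (deriv (u t)) x + u t x * deriv (u t) x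
        + (1 / 10) * deriv (deriv (deriv (u t))) x = 0 := by
  have hu_front : u = fun t x => frontProfile (x + 12 / 5 * t) := by
    ext t x
    rw [hu, one_div_cosh_sq]
    simp only [frontProfile, frontPolynomial, eval_mul, eval_C, eval_pow, eval_add, eval_one,
      eval_X]
    ring
  intro t x
  subst hu_front
  simp only [deriv_fun_comp_add_const, deriv_comp_const_add_mul]
  exact frontProfile_ode (x + 12 / 5 * t)
end
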